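/- Let F be an algebraically closed field of characteristic p > 2, m,n,t ≥ 1, λ_i, κ_j ∈ F nonzero with |λ| = λ_1^{p−1} = ⋯ = κ_n^{p−1}, and μ ∈ F^{2m+2}. For a 2-cocycle φ of h^{λ,κ,μ}_{m,n,t}, define H_φ : L × V → F by H_φ(g,h) = φ(g, (ad g)^{p−1}(h)) − φ(P(g), h), where ad g acts on V through the superalgebra bracket ([g,·] on L and ρ(g) on W). If φ = φ₁ + Σ_{k=1}^{t} a_k·(e^{2m+2}∧η^k) with φ₁ in the linear span of A1 ∪ A2 ∪ A3 ∪ A4 and a_1,…,a_t ∈ F, then H_φ = 0 if and only if a_1 = ⋯ = a_t = 0. In particular, every φ₁ in the span of A1 ∪ A2 ∪ A3 ∪ A4 satisfies φ₁(g, (ad g)^{p−1}(h)) = φ₁(P(g), h) for all g ∈ L, h ∈ V. -/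

import Mathlib

/-- `i`-th coordinate functional w.r.t. the basis `b` (0-indexed), extended by `0`. -/
noncomputable def coordE {F : Type*} [Field F] {L : Type*} [AddCommGroup L] [Module F L] {M : ℕ}
    (b : Module.Basis (Fin M) F L) (i : ℕ) (x : L) : F :=
  if h : i < M then b.repr x ⟨i, h⟩ else 0

/-- `j`-th coordinate of a vector of `F^M`, extended by `0`. -/
def coordW (F : Type*) [Field F] (M : ℕ) (j : ℕ) (u : Fin M → F) : F :=
  if h : j < M then u ⟨j, h⟩ else 0

/-- The even basis 2-cochain `e^{i,j}` (0-indexed). -/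
noncomputable def eWedge {F : Type*} [Field F] {L : Type*} [AddCommGroup L] [Module F L] {M : ℕ}
    (b : Module.Basis (Fin M) F L) (W : Type*) (i j : ℕ)
    (x y : L × W) : F :=
  coordE b i x.1 * coordE b j y.1 - coordE b j x.1 * coordE b i y.1

/-- The even symmetric basis 2-cochain `ω^{i,j}` (0-indexed; also used for the
`η^{k,l}` via the index shift `2n + _`). -/
def wSym (F : Type*) [Field F] (L : Type*) (M : ℕ) (i j : ℕ)
    (x y : L × (Fin M → F)) : F :=
  if i = j then coordW F M i x.2 * coordW F M i y.2
  else coordW F M i x.2 * coordW F M j y.2 + coordW F M j x.2 * coordW F M i y.2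

/-- The odd basis 2-cochain `e^i ∧ ω^j` (0-indexed; also used for `e^i ∧ η^k`). -/
noncomputable def eWw {F : Type*} [Field F] {L : Type*} [AddCommGroup L] [Module F L] {M : ℕ}
    (b : Module.Basis (Fin M) F L) (M' : ℕ) (i j : ℕ)
    (x y : L × (Fin M' → F)) : F :=
  coordE b i x.1 * coordW F M' j y.2 - coordE b i y.1 * coordW F M' j x.2

attribute [local instance] LieRing.ofAssociativeRing

section myhelpers
variable {F : Type*} [Field F] {L : Type*} [AddCommGroup L] [Module F L] {M : ℕ}
  (b : Module.Basis (Fin M) F L)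

lemma coordE_add (i : ℕ) (x y : L) : coordE b i (x + y) = coordE b i x + coordE b i y := by
  unfold coordE; split <;> simp

lemma coordE_smul (i : ℕ) (c : F) (x : L) : coordE b i (c • x) = c * coordE b i x := by
  unfold coordE; split <;> simp

lemma coordE_neg (i : ℕ) (x : L) : coordE b i (-x) = -coordE b i x := by
  unfold coordE; split <;> simp

lemma coordE_zero (i : ℕ) : coordE b i (0 : L) = 0 := by
  unfold coordE; split <;> simp

lemma coordE_sum (i : ℕ) {α : Type*} (s : Finset α) (f : α → L) :
    coordE b i (∑ j ∈ s, f j) = ∑ j ∈ s, coordE b i (f j) := by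
  classical
  induction s using Finset.induction with
  | empty => simp [coordE_zero]
  | insert _ _ hx ih => simp [Finset.sum_insert hx, coordE_add, ih]

lemma coordE_basis (i : ℕ) (k : Fin M) :
    coordE b i (b k) = if i = (k : ℕ) then 1 else 0 := by
  rcases Nat.lt_or_ge i M with h | h
  · rw [coordE, dif_pos h, b.repr_self, Finsupp.single_apply]
    simp [Fin.ext_iff, eq_comm]
  · rw [coordE, dif_neg (by omega)]
    have : i ≠ (k : ℕ) := by have := k.isLt; omega
    simp [this]

lemma coordW_zero {F : Type*} [Field F] {M : ℕ} (j : ℕ) :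
    coordW F M j (0 : Fin M → F) = 0 := by
  unfold coordW; split <;> simp

lemma sum_range_fin {N : ℕ} {α : Type*} [AddCommMonoid α] (f : ℕ → α) :
    ∑ i ∈ Finset.range N, f i = ∑ i : Fin N, f (i : ℕ) := by
  rw [Finset.sum_range]


lemma sum_lie' {F : Type*} [CommRing F] {L : Type*} [LieRing L] [LieAlgebra F L]
    {α : Type*} (s : Finset α) (f : α → L) (y : L) :
    ⁅∑ i ∈ s, f i, y⁆ = ∑ i ∈ s, ⁅f i, y⁆ := by
  classical
  induction s using Finset.induction with
  | empty => simp
  | insert _ _ hx ih => simp [Finset.sum_insert hx, add_lie, ih]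

lemma lie_sum' {F : Type*} [CommRing F] {L : Type*} [LieRing L] [LieAlgebra F L]
    {α : Type*} (s : Finset α) (f : α → L) (y : L) :
    ⁅y, ∑ i ∈ s, f i⁆ = ∑ i ∈ s, ⁅y, f i⁆ := by
  classical
  induction s using Finset.induction with
  | empty => simp
  | insert _ _ hx ih => simp [Finset.sum_insert hx, lie_add, ih]

lemma dsum2 {β : Type*} [AddCommMonoid β] (N i₁ j₁ i₂ j₂ : ℕ)
    (h₁ : i₁ < N) (h₂ : j₁ < N) (h₃ : i₂ < N) (h₄ : j₂ < N) (f g : ℕ → ℕ → β) :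
    ∑ i ∈ Finset.range N, ∑ j ∈ Finset.range N,
      ((if j = j₁ then (if i = i₁ then f i j else 0) else 0)
       + (if j = j₂ then (if i = i₂ then g i j else 0) else 0))
    = f i₁ j₁ + g i₂ j₂ := by
  classical
  have h : ∀ i ∈ Finset.range N, ∑ j ∈ Finset.range N,
      ((if j = j₁ then (if i = i₁ then f i j else 0) else 0)
       + (if j = j₂ then (if i = i₂ then g i j else 0) else 0))
      = (if i = i₁ then f i j₁ else 0) + (if i = i₂ then g i j₂ else 0) := by
    intro i _
    rw [Finset.sum_add_distrib, Finset.sum_ite_eq', Finset.sum_ite_eq',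
      if_pos (Finset.mem_range.mpr h₂), if_pos (Finset.mem_range.mpr h₄)]
  rw [Finset.sum_congr rfl h, Finset.sum_add_distrib, Finset.sum_ite_eq',
    Finset.sum_ite_eq', if_pos (Finset.mem_range.mpr h₁), if_pos (Finset.mem_range.mpr h₃)]

end myhelpers
set_option maxHeartbeats 2000000 in
/-- For the restricted twisted Heisenberg Lie superalgebra
(setup 0-indexed as in the paper, with `[p]`-operator `P`), write a 2-cocycle as
`φ = φ₁ + Σ_k a_k e^{2m+2}∧η^k` with `φ₁` an arbitrary linear combination of the
cocycles in `A1 ∪ A2 ∪ A3 ∪ A4`.  Then the map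
`H_φ(g,h) = φ(g, (ad g)^{p-1}h) − φ(P g, h)` vanishes identically iff all
`a_k = 0`; in particular every `φ₁` in the span of `A1 ∪ A2 ∪ A3 ∪ A4`
satisfies `φ₁(g, (ad g)^{p-1}h) = φ₁(P g, h)`. -/
theorem stmt_11
    (F : Type*) [Field F] [IsAlgClosed F]
    (p : ℕ) [Fact (Nat.Prime p)] [CharP F p] (hp2 : 2 < p)
    (m n t : ℕ) (hm : 1 ≤ m) (hn : 1 ≤ n) (ht : 1 ≤ t)
    (lam kap : ℕ → F) (hlam : ∀ i, i < m → lam i ≠ 0) (hkap : ∀ j, j < n → kap j ≠ 0)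
    (hlameq : ∀ i, i < m → lam i ^ (p-1) = lam 0 ^ (p-1))
    (hkapeq : ∀ j, j < n → kap j ^ (p-1) = lam 0 ^ (p-1))
    (mu : ℕ → F)
    (L : Type*) [LieRing L] [LieAlgebra F L]
    (b : Module.Basis (Fin (2*m+2)) F L)
    (e : ℕ → L) (he : ∀ i : Fin (2*m+2), e (i : ℕ) = b i)
    (hbr : ∀ i j : ℕ, i < 2*m+2 → j < 2*m+2 →
      ⁅e i, e j⁆ =
        if i < m ∧ j = m + i then e (2*m)
        else if j < m ∧ i = m + j then - e (2*m)
        else if i = 2*m+1 ∧ j < m then lam j • e (m + j)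
        else if i = 2*m+1 ∧ m ≤ j ∧ j < 2*m then lam (j-m) • e (j-m)
        else if j = 2*m+1 ∧ i < m then - (lam i • e (m + i))
        else if j = 2*m+1 ∧ m ≤ i ∧ i < 2*m then - (lam (i-m) • e (i-m))
        else 0)
    (ρ : L →ₗ⁅F⁆ Module.End F (Fin (2*n+t) → F))
    (hρ0 : ∀ i, i < 2*m+1 → ρ (e i) = 0)
    (hρ1 : ∀ (v : Fin (2*n+t) → F) (i : Fin (2*n+t)),
      ρ (e (2*m+1)) v i =
        if h1 : (i : ℕ) < n then kap i * v ⟨(i : ℕ) + n, by omega⟩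
        else if h2 : (i : ℕ) < 2*n then
          kap ((i : ℕ) - n) * v ⟨(i : ℕ) - n, by have := i.isLt; omega⟩
        else 0)
    (Br : L × (Fin (2*n+t) → F) → L × (Fin (2*n+t) → F) → L × (Fin (2*n+t) → F))
    (hBr : ∀ (x y : L) (u v : Fin (2*n+t) → F),
      Br (x, u) (y, v) =
        (⁅x, y⁆ +
          ((∑ j : Fin n, u ⟨(j : ℕ), by have := j.isLt; omega⟩
              * v ⟨(j : ℕ), by have := j.isLt; omega⟩)
           - (∑ j : Fin n, u ⟨n + (j : ℕ), by have := j.isLt; omega⟩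
              * v ⟨n + (j : ℕ), by have := j.isLt; omega⟩)
           + (∑ k : Fin t, u ⟨2*n + (k : ℕ), by have := k.isLt; omega⟩
              * v ⟨2*n + (k : ℕ), by have := k.isLt; omega⟩)) • e (2*m),
         ρ x v - ρ y u))
    (P : L → L)
    (hP : ∀ a : ℕ → F,
      P (∑ i ∈ Finset.range (2*m+2), a i • e i) =
        (a (2*m+1) ^ (p-1) * lam 0 ^ (p-1)) • (∑ i ∈ Finset.range (2*m), a i • e i)
        + (a (2*m+1) ^ p * lam 0 ^ (p-1)) • e (2*m+1)
        + ((∑ i ∈ Finset.range (2*m+2), a i ^ p * mu i)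
            + (2 : F)⁻¹ * a (2*m+1) ^ (p-2)
              * (∑ i ∈ Finset.range m, lam i ^ (p-2) * (a i ^ 2 - a (m+i) ^ 2)))
          • e (2*m))
    -- coefficients of φ₁ in the spanning set A1 ∪ A2 ∪ A3 ∪ A4 (supported on the
    -- admissible index sets):
    (c1 c2 c3 c4 c5 c6 : ℕ → ℕ → F) (c7 : ℕ → F) (c8 : ℕ → ℕ → F)
    (hc1 : ∀ i j, ¬(i < j ∧ j < m ∧ lam i ^ 2 = lam j ^ 2) → c1 i j = 0)
    (hc2 : ∀ i j, ¬(i ≤ j ∧ j < m ∧ lam i ^ 2 = lam j ^ 2) → c2 i j = 0)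
    (hc3 : ∀ i j, ¬(i < m ∧ j < n ∧ lam i ^ 2 = kap j ^ 2) → c3 i j = 0)
    (hc4 : ∀ i j, ¬(i < m ∧ j < n ∧ lam i ^ 2 = kap j ^ 2) → c4 i j = 0)
    (hc5 : ∀ i j, ¬(i ≤ j ∧ j < n ∧ kap i ^ 2 = kap j ^ 2) → c5 i j = 0)
    (hc6 : ∀ i j, ¬(i ≤ j ∧ j < n ∧ kap i ^ 2 = kap j ^ 2) → c6 i j = 0)
    (hc7 : ∀ i, ¬(i < t - 1) → c7 i = 0)
    (hc8 : ∀ k l, ¬(k < l ∧ l < t) → c8 k l = 0)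
    (a : ℕ → F)
    (φ₁ φ : L × (Fin (2*n+t) → F) → L × (Fin (2*n+t) → F) → F)
    (hφ₁ : φ₁ = fun x y =>
      (∑ i ∈ Finset.range m, ∑ j ∈ Finset.range m, c1 i j *
        (eWedge b (Fin (2*n+t) → F) i j x y
          - lam i * (lam j)⁻¹ * eWedge b (Fin (2*n+t) → F) (m+i) (m+j) x y))
      + (∑ i ∈ Finset.range m, ∑ j ∈ Finset.range m, c2 i j *
        (eWedge b (Fin (2*n+t) → F) i (m+j) x y
          + lam i * (lam j)⁻¹ * eWedge b (Fin (2*n+t) → F) j (m+i) x y))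
      + (∑ i ∈ Finset.range m, ∑ j ∈ Finset.range n, c3 i j *
        (eWw b (2*n+t) (m+i) j x y - lam i * (kap j)⁻¹ * eWw b (2*n+t) i (n+j) x y))
      + (∑ i ∈ Finset.range m, ∑ j ∈ Finset.range n, c4 i j *
        (eWw b (2*n+t) i j x y - lam i * (kap j)⁻¹ * eWw b (2*n+t) (m+i) (n+j) x y))
      + (∑ i ∈ Finset.range n, ∑ j ∈ Finset.range n, c5 i j *
        (wSym F L (2*n+t) i j x y - kap i * (kap j)⁻¹ * wSym F L (2*n+t) (n+i) (n+j) x y))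
      + (∑ i ∈ Finset.range n, ∑ j ∈ Finset.range n, c6 i j *
        (wSym F L (2*n+t) i (n+j) x y - kap i * (kap j)⁻¹ * wSym F L (2*n+t) j (n+i) x y))
      + (∑ i ∈ Finset.range (t-1), c7 i * wSym F L (2*n+t) (2*n+i) (2*n+i) x y)
      + (∑ k ∈ Finset.range t, ∑ l ∈ Finset.range t, c8 k l *
          wSym F L (2*n+t) (2*n+k) (2*n+l) x y))
    (hφ : φ = fun x y => φ₁ x y
      + ∑ k ∈ Finset.range t, a k * eWw b (2*n+t) (2*m+1) (2*n+k) x y) :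
    -- `H_φ = 0` iff all `a_k` vanish:
    ((∀ (g : L) (h : L × (Fin (2*n+t) → F)),
        φ (g, 0) ((fun z => Br (g, 0) z)^[p-1] h) - φ (P g, 0) h = 0)
      ↔ ∀ k, k < t → a k = 0)
    -- in particular every `φ₁` in the span of `A1 ∪ A2 ∪ A3 ∪ A4` satisfies
    -- `φ₁(g, (ad g)^{p-1} h) = φ₁(P g, h)`:
    ∧ (∀ (g : L) (h : L × (Fin (2*n+t) → F)),
        φ₁ (g, 0) ((fun z => Br (g, 0) z)^[p-1] h) = φ₁ (P g, 0) h) := by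
  classical
  have hp3 : 3 ≤ p := by omega
  have hpodd : Odd p := (Fact.out : Nat.Prime p).odd_of_ne_two (by omega)
  have hev : Even (p-1) := Nat.Odd.sub_odd hpodd odd_one
  have hL0 : lam 0 ^ (p-1) ≠ 0 := pow_ne_zero _ (hlam 0 hm)
  have heN : ∀ (k : ℕ) (hk : k < 2*m+2), e k = b ⟨k, hk⟩ := fun k hk => he ⟨k, hk⟩
  have coordE_e : ∀ (jj kk : ℕ), kk < 2*m+2 →
      coordE b jj (e kk) = if jj = kk then 1 else 0 := by
    intro jj kk hkk
    rw [heN kk hkk, coordE_basis]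
  have hexp : ∀ x : L, x = ∑ i ∈ Finset.range (2*m+2), coordE b i x • e i := by
    intro x
    conv_lhs => rw [← b.sum_repr x]
    rw [sum_range_fin (f := fun i => coordE b i x • e i)]
    refine (Finset.sum_congr rfl fun i _ => ?_).symm
    rw [he i, coordE, dif_pos i.isLt]
  have expand : ∀ (g x : L) (jj : ℕ), coordE b jj ⁅g, x⁆
      = ∑ i ∈ Finset.range (2*m+2), ∑ j₀ ∈ Finset.range (2*m+2),
          coordE b i g * (coordE b j₀ x * coordE b jj ⁅e i, e j₀⁆) := by
    intro g x jj
    conv_lhs => rw [hexp g, hexp x]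
    rw [sum_lie' (F := F), coordE_sum]
    refine Finset.sum_congr rfl fun i _ => ?_
    rw [smul_lie, coordE_smul, lie_sum' (F := F), coordE_sum, Finset.mul_sum]
    refine Finset.sum_congr rfl fun j₀ _ => ?_
    rw [lie_smul, coordE_smul]
  have hbrC : ∀ (g x : L) (j : ℕ), j < 2*m →
      coordE b j ⁅g, x⁆ = (if j < m then lam j else lam (j-m)) *
        (coordE b (2*m+1) g * coordE b (if j < m then m+j else j-m) x
         - coordE b (2*m+1) x * coordE b (if j < m then m+j else j-m) g) := by
    intro g x j hj
    rw [expand g x j]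
    rcases Nat.lt_or_ge j m with hjc | hjc
    · simp only [if_pos hjc]
      have key : ∀ i ∈ Finset.range (2*m+2), ∀ j₀ ∈ Finset.range (2*m+2),
          coordE b i g * (coordE b j₀ x * coordE b j ⁅e i, e j₀⁆)
          = (if j₀ = m+j then (if i = 2*m+1 then
                coordE b i g * (coordE b j₀ x * lam j) else 0) else 0)
            + (if j₀ = 2*m+1 then (if i = m+j then
                coordE b i g * (coordE b j₀ x * (-lam j)) else 0) else 0) := by
        intro i hi j₀ hj₀
        rw [Finset.mem_range] at hi hj₀
        rw [hbr i j₀ hi hj₀]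
        split_ifs <;>
          first
            | omega
            | (simp only [coordE_zero, coordE_neg, coordE_smul, mul_zero, zero_mul,
                 mul_neg, neg_zero, add_zero, zero_add, mul_one, neg_neg]
               all_goals first
                 | ring1
                 | (rw [coordE_e j (2*m) (by omega), if_neg (by omega)]; ring1)
                 | (rw [coordE_e j (m+j₀) (by omega), if_neg (by omega)]; ring1)
                 | (rw [coordE_e j (j₀-m) (by omega), if_neg (by omega)]; ring1)
                 | (rw [coordE_e j (m+i) (by omega), if_neg (by omega)]; ring1)
                 | (rw [coordE_e j (i-m) (by omega), if_neg (by omega)]; ring1)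
                 | (rw [coordE_e j (j₀-m) (by omega), if_pos (by omega),
                      show lam (j₀-m) = lam j from by rw [show j₀-m = j from by omega]];
                    ring1)
                 | (rw [coordE_e j (i-m) (by omega), if_pos (by omega),
                      show lam (i-m) = lam j from by rw [show i-m = j from by omega]];
                    ring1)
                 | (rw [coordE_e j (m+j₀) (by omega), if_pos (by omega),
                      show lam j₀ = lam (j-m) from by rw [show j₀ = j-m from by omega]];
                    ring1)
                 | (rw [coordE_e j (m+i) (by omega), if_pos (by omega),
                      show lam i = lam (j-m) from by rw [show i = j-m from by omega]];
                    ring1))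
      rw [Finset.sum_congr rfl (fun i hi => Finset.sum_congr rfl (key i hi)),
        dsum2 (2*m+2) (2*m+1) (m+j) (m+j) (2*m+1) (by omega) (by omega) (by omega)
          (by omega)]
      ring
    · simp only [if_neg (not_lt.mpr hjc)]
      have key : ∀ i ∈ Finset.range (2*m+2), ∀ j₀ ∈ Finset.range (2*m+2),
          coordE b i g * (coordE b j₀ x * coordE b j ⁅e i, e j₀⁆)
          = (if j₀ = j-m then (if i = 2*m+1 then
                coordE b i g * (coordE b j₀ x * lam (j-m)) else 0) else 0)
            + (if j₀ = 2*m+1 then (if i = j-m then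
                coordE b i g * (coordE b j₀ x * (-lam (j-m))) else 0) else 0) := by
        intro i hi j₀ hj₀
        rw [Finset.mem_range] at hi hj₀
        rw [hbr i j₀ hi hj₀]
        split_ifs <;>
          first
            | omega
            | (simp only [coordE_zero, coordE_neg, coordE_smul, mul_zero, zero_mul,
                 mul_neg, neg_zero, add_zero, zero_add, mul_one, neg_neg]
               all_goals first
                 | ring1
                 | (rw [coordE_e j (2*m) (by omega), if_neg (by omega)]; ring1)
                 | (rw [coordE_e j (m+j₀) (by omega), if_neg (by omega)]; ring1)
                 | (rw [coordE_e j (j₀-m) (by omega), if_neg (by omega)]; ring1)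
                 | (rw [coordE_e j (m+i) (by omega), if_neg (by omega)]; ring1)
                 | (rw [coordE_e j (i-m) (by omega), if_neg (by omega)]; ring1)
                 | (rw [coordE_e j (j₀-m) (by omega), if_pos (by omega),
                      show lam (j₀-m) = lam j from by rw [show j₀-m = j from by omega]];
                    ring1)
                 | (rw [coordE_e j (i-m) (by omega), if_pos (by omega),
                      show lam (i-m) = lam j from by rw [show i-m = j from by omega]];
                    ring1)
                 | (rw [coordE_e j (m+j₀) (by omega), if_pos (by omega),
                      show lam j₀ = lam (j-m) from by rw [show j₀ = j-m from by omega]];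
                    ring1)
                 | (rw [coordE_e j (m+i) (by omega), if_pos (by omega),
                      show lam i = lam (j-m) from by rw [show i = j-m from by omega]];
                    ring1))
      rw [Finset.sum_congr rfl (fun i hi => Finset.sum_congr rfl (key i hi)),
        dsum2 (2*m+2) (2*m+1) (j-m) (j-m) (2*m+1) (by omega) (by omega) (by omega)
          (by omega)]
      ring
  have hbr21 : ∀ (g x : L), coordE b (2*m+1) ⁅g, x⁆ = 0 := by
    intro g x
    rw [expand g x (2*m+1)]
    have key : ∀ i ∈ Finset.range (2*m+2), ∀ j₀ ∈ Finset.range (2*m+2),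
        coordE b i g * (coordE b j₀ x * coordE b (2*m+1) ⁅e i, e j₀⁆) = 0 := by
      intro i hi j₀ hj₀
      rw [Finset.mem_range] at hi hj₀
      rw [hbr i j₀ hi hj₀]
      split_ifs <;>
        (try simp only [coordE_zero, coordE_neg, coordE_smul, mul_zero, zero_mul,
          mul_neg, neg_zero, neg_neg]) <;>
        first
          | rfl
          | (rw [coordE_e (2*m+1) (2*m) (by omega), if_neg (by omega)]; ring1)
          | (rw [coordE_e (2*m+1) (m+j₀) (by omega), if_neg (by omega)]; ring1)
          | (rw [coordE_e (2*m+1) (j₀-m) (by omega), if_neg (by omega)]; ring1)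
          | (rw [coordE_e (2*m+1) (m+i) (by omega), if_neg (by omega)]; ring1)
          | (rw [coordE_e (2*m+1) (i-m) (by omega), if_neg (by omega)]; ring1)
    rw [Finset.sum_congr rfl (fun i hi => Finset.sum_congr rfl (key i hi))]
    simp
  have hρg : ∀ g : L, ρ g = coordE b (2*m+1) g • ρ (e (2*m+1)) := by
    intro g
    have hcoe : ρ g = ρ.toLinearMap g := rfl
    rw [hcoe]
    conv_lhs => rw [hexp g]
    rw [map_sum, Finset.sum_range_succ]
    have hz : ∀ i ∈ Finset.range (2*m+1), ρ.toLinearMap (coordE b i g • e i) = 0 := by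
      intro i hi
      rw [map_smul]
      have : ρ.toLinearMap (e i) = ρ (e i) := rfl
      rw [this, hρ0 i (Finset.mem_range.mp hi), smul_zero]
    rw [Finset.sum_congr rfl hz, Finset.sum_const_zero, zero_add, map_smul]
    rfl
  have hρapp : ∀ (g : L) (v : Fin (2*n+t) → F) (i : Fin (2*n+t)),
      ρ g v i = coordE b (2*m+1) g * (ρ (e (2*m+1)) v i) := by
    intro g v i
    rw [hρg g]
    rfl
  have hρC : ∀ (g : L) (v : Fin (2*n+t) → F) (i : ℕ), i < 2*n →
      coordW F (2*n+t) i (ρ g v) = coordE b (2*m+1) g *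
        ((if i < n then kap i else kap (i-n)) *
          coordW F (2*n+t) (if i < n then i+n else i-n) v) := by
    intro g v i hi
    rw [coordW, dif_pos (by omega : i < 2*n+t), hρapp, hρ1]
    rcases Nat.lt_or_ge i n with h1 | h1
    · rw [dif_pos (show ((⟨i, by omega⟩ : Fin (2*n+t)) : ℕ) < n from h1),
        if_pos h1, if_pos h1, coordW, dif_pos (by omega : i+n < 2*n+t)]
    · rw [dif_neg (show ¬((⟨i, by omega⟩ : Fin (2*n+t)) : ℕ) < n by exact not_lt.mpr h1),
        dif_pos (show ((⟨i, by omega⟩ : Fin (2*n+t)) : ℕ) < 2*n from hi),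
        if_neg (not_lt.mpr h1), if_neg (not_lt.mpr h1), coordW,
        dif_pos (by omega : i-n < 2*n+t)]
  have hρC0 : ∀ (g : L) (v : Fin (2*n+t) → F) (i : ℕ), 2*n ≤ i →
      coordW F (2*n+t) i (ρ g v) = 0 := by
    intro g v i hi
    rcases Nat.lt_or_ge i (2*n+t) with h1 | h1
    · rw [coordW, dif_pos h1, hρapp, hρ1]
      rw [dif_neg (show ¬((⟨i, h1⟩ : Fin (2*n+t)) : ℕ) < n by simp; omega),
        dif_neg (show ¬((⟨i, h1⟩ : Fin (2*n+t)) : ℕ) < 2*n by simp; omega), mul_zero]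
    · rw [coordW, dif_neg (not_lt.mpr h1)]
  have hBr0 : ∀ (g : L) (z : L × (Fin (2*n+t) → F)),
      Br (g, (0 : Fin (2*n+t) → F)) z = (⁅g, z.1⁆, ρ g z.2) := by
    intro g z
    obtain ⟨y, v⟩ := z
    rw [hBr]
    simp
  have hIT : ∀ (g : L) (h : L × (Fin (2*n+t) → F)),
      (∀ j, j < 2*m → coordE b j ((fun z => Br (g, 0) z)^[p-1] h).1
        = lam 0 ^ (p-1) * (coordE b (2*m+1) g ^ (p-1) * coordE b j h.1
            - coordE b (2*m+1) g ^ (p-2) * coordE b (2*m+1) h.1 * coordE b j g))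
      ∧ coordE b (2*m+1) ((fun z => Br (g, 0) z)^[p-1] h).1 = 0
      ∧ (∀ i, i < 2*n → coordW F (2*n+t) i ((fun z => Br (g, 0) z)^[p-1] h).2
          = coordE b (2*m+1) g ^ (p-1) * lam 0 ^ (p-1) * coordW F (2*n+t) i h.2)
      ∧ (∀ i, 2*n ≤ i → coordW F (2*n+t) i ((fun z => Br (g, 0) z)^[p-1] h).2 = 0) := by
    intro g h
    have hBrfst : ∀ z : L × (Fin (2*n+t) → F),
        ((fun z => Br (g, 0) z) z).1 = ⁅g, z.1⁆ := by
      intro z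
      show (Br (g, (0 : Fin (2*n+t) → F)) z).1 = ⁅g, z.1⁆
      rw [hBr0]
    have hBrsnd : ∀ z : L × (Fin (2*n+t) → F),
        ((fun z => Br (g, 0) z) z).2 = ρ g z.2 := by
      intro z
      show (Br (g, (0 : Fin (2*n+t) → F)) z).2 = ρ g z.2
      rw [hBr0]
    have claimL21 : ∀ k : ℕ,
        coordE b (2*m+1) ((fun z => Br (g, 0) z)^[k+1] h).1 = 0 := by
      intro k
      rw [Function.iterate_succ_apply', hBrfst, hbr21]
    have claimW0 : ∀ (k : ℕ) (i : ℕ), 2*n ≤ i →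
        coordW F (2*n+t) i ((fun z => Br (g, 0) z)^[k+1] h).2 = 0 := by
      intro k i hi
      rw [Function.iterate_succ_apply', hBrsnd, hρC0 g _ i hi]
    have claimW : ∀ (k : ℕ) (i : ℕ), i < 2*n →
        coordW F (2*n+t) i ((fun z => Br (g, 0) z)^[k] h).2
        = (coordE b (2*m+1) g * (if i < n then kap i else kap (i-n)))^k
            * coordW F (2*n+t) (if Even k then i else (if i < n then i+n else i-n)) h.2 := by
      intro k
      induction k with
      | zero =>
        intro i hi
        rw [Function.iterate_zero_apply, pow_zero, one_mul, if_pos Even.zero]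
      | succ k ih =>
        intro i hi
        rw [Function.iterate_succ_apply', hBrsnd, hρC g _ i hi]
        rcases Nat.lt_or_ge i n with hin | hin
        · simp only [if_pos hin]
          rw [ih (i+n) (by omega)]
          simp only [if_neg (show ¬ i+n < n by omega), Nat.add_sub_cancel]
          by_cases hk : Even k
          · rw [if_pos hk, if_neg (by simp [Nat.even_add_one, hk])]
            ring
          · rw [if_neg hk, if_pos (by simp [Nat.even_add_one, hk])]
            ring
        · simp only [if_neg (show ¬ i < n by omega)]
          rw [ih (i-n) (by omega)]
          simp only [if_pos (show i-n < n by omega)]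
          rw [show i-n+n = i from by omega]
          by_cases hk : Even k
          · rw [if_pos hk, if_neg (by simp [Nat.even_add_one, hk])]
            ring
          · rw [if_neg hk, if_pos (by simp [Nat.even_add_one, hk])]
            ring
    have claimL : ∀ (k : ℕ) (j : ℕ), j < 2*m →
        coordE b j ((fun z => Br (g, 0) z)^[k+1] h).1
        = (coordE b (2*m+1) g * (if j < m then lam j else lam (j-m)))^k
            * ((if j < m then lam j else lam (j-m)) *
              (if Even k
               then coordE b (2*m+1) g * coordE b (if j < m then m+j else j-m) h.1
                    - coordE b (2*m+1) h.1 * coordE b (if j < m then m+j else j-m) g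
               else coordE b (2*m+1) g * coordE b j h.1
                    - coordE b (2*m+1) h.1 * coordE b j g)) := by
      intro k
      induction k with
      | zero =>
        intro j hj
        rw [Function.iterate_succ_apply', Function.iterate_zero_apply, hBrfst,
          hbrC g h.1 j hj, pow_zero, one_mul, if_pos Even.zero]
      | succ k ih =>
        intro j hj
        rw [Function.iterate_succ_apply', hBrfst, hbrC g _ j hj, claimL21 k]
        rcases Nat.lt_or_ge j m with hjm | hjm
        · simp only [if_pos hjm]
          rw [ih (m+j) (by omega)]
          simp only [if_neg (show ¬ m+j < m by omega), Nat.add_sub_cancel_left]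
          by_cases hk : Even k
          · rw [if_pos hk, if_neg (by simp [Nat.even_add_one, hk])]
            ring
          · rw [if_neg hk, if_pos (by simp [Nat.even_add_one, hk])]
            ring
        · simp only [if_neg (show ¬ j < m by omega)]
          rw [ih (j-m) (by omega)]
          simp only [if_pos (show j-m < m by omega)]
          rw [show m+(j-m) = j from by omega]
          by_cases hk : Even k
          · rw [if_pos hk, if_neg (by simp [Nat.even_add_one, hk])]
            ring
          · rw [if_neg hk, if_pos (by simp [Nat.even_add_one, hk])]
            ring
    have hoddp2 : ¬ Even (p-2) := by
      rcases hpodd with ⟨r, hr⟩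
      intro hcon
      rcases hcon with ⟨s, hs⟩
      omega
    refine ⟨?_, ?_, ?_, ?_⟩
    · intro j hj
      have hcl := claimL (p-2) j hj
      rw [show p-2+1 = p-1 from by omega] at hcl
      rw [hcl, if_neg hoddp2, mul_pow]
      have hlp : (if j < m then lam j else lam (j-m))^(p-1) = lam 0 ^ (p-1) := by
        split
        · exact hlameq j (by omega)
        · exact hlameq (j-m) (by omega)
      rw [← hlp]
      have hsplit : p - 1 = (p-2) + 1 := by omega
      rw [hsplit, pow_succ, pow_succ]
      ring
    · have := claimL21 (p-2)
      rw [show p-2+1 = p-1 from by omega] at this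
      exact this
    · intro i hi
      have hcw := claimW (p-1) i hi
      rw [hcw, if_pos hev, mul_pow]
      have hkp : (if i < n then kap i else kap (i-n))^(p-1) = lam 0 ^ (p-1) := by
        split
        · exact hkapeq i (by omega)
        · exact hkapeq (i-n) (by omega)
      rw [hkp]
    · intro i hi
      have := claimW0 (p-2) i hi
      rw [show p-2+1 = p-1 from by omega] at this
      exact this
  have hPC : ∀ g : L,
      (∀ j, j < 2*m → coordE b j (P g)
          = coordE b (2*m+1) g ^ (p-1) * lam 0 ^ (p-1) * coordE b j g)
      ∧ coordE b (2*m+1) (P g) = coordE b (2*m+1) g ^ p * lam 0 ^ (p-1) := by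
    intro g
    have hPg := hP (fun i => coordE b i g)
    rw [← hexp g] at hPg
    have hco : ∀ jj : ℕ, jj < 2*m+2 → coordE b jj (P g) =
        (coordE b (2*m+1) g ^ (p-1) * lam 0 ^ (p-1)) *
          (if jj < 2*m then coordE b jj g else 0)
        + (coordE b (2*m+1) g ^ p * lam 0 ^ (p-1)) * (if jj = 2*m+1 then 1 else 0)
        + ((∑ i ∈ Finset.range (2*m+2), coordE b i g ^ p * mu i)
            + (2 : F)⁻¹ * coordE b (2*m+1) g ^ (p-2)
              * (∑ i ∈ Finset.range m, lam i ^ (p-2) *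
                  (coordE b i g ^ 2 - coordE b (m+i) g ^ 2)))
            * (if jj = 2*m then 1 else 0) := by
      intro jj hjj
      rw [hPg, coordE_add, coordE_add, coordE_smul, coordE_smul, coordE_smul,
        coordE_sum, coordE_e _ _ (by omega), coordE_e _ _ (by omega)]
      congr 2
      have : ∀ i ∈ Finset.range (2*m), coordE b jj (coordE b i g • e i)
          = if jj = i then coordE b i g else 0 := by
        intro i hi
        rw [coordE_smul, coordE_e _ _ (by have := Finset.mem_range.mp hi; omega)]
        split <;> simp
      rw [Finset.sum_congr rfl this, Finset.sum_ite_eq]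
      simp only [Finset.mem_range]
    constructor
    · intro j hj
      rw [hco j (by omega), if_pos hj, if_neg (by omega), if_neg (by omega)]
      ring
    · rw [hco (2*m+1) (by omega), if_neg (by omega), if_pos rfl, if_neg (by omega)]
      ring
  have master1 : ∀ (g : L) (h : L × (Fin (2*n+t) → F)),
      φ₁ (g, 0) ((fun z => Br (g, 0) z)^[p-1] h) = φ₁ (P g, 0) h := by
    intro g h
    obtain ⟨IT1, IT2, IT3, IT4⟩ := hIT g h
    obtain ⟨PC1, PC2⟩ := hPC g
    have GE : ∀ i j : ℕ, i < 2*m → j < 2*m →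
        eWedge b (Fin (2*n+t) → F) i j (g, 0) ((fun z => Br (g, 0) z)^[p-1] h)
        = eWedge b (Fin (2*n+t) → F) i j (P g, 0) h := by
      intro i j hi hj
      simp only [eWedge]
      rw [IT1 i hi, IT1 j hj, PC1 i hi, PC1 j hj]
      ring
    have GW : ∀ i j : ℕ, i < 2*m → j < 2*n →
        eWw b (2*n+t) i j (g, 0) ((fun z => Br (g, 0) z)^[p-1] h)
        = eWw b (2*n+t) i j (P g, 0) h := by
      intro i j hi hj
      simp only [eWw, coordW_zero]
      rw [IT3 j hj, PC1 i hi]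
      ring
    have GS : ∀ i j : ℕ,
        wSym F L (2*n+t) i j (g, 0) ((fun z => Br (g, 0) z)^[p-1] h)
        = wSym F L (2*n+t) i j (P g, 0) h := by
      intro i j
      simp only [wSym, coordW_zero]
      split_ifs <;> ring
    rw [hφ₁]
    beta_reduce
    congr 1
    · congr 1
      · congr 1
        · congr 1
          · congr 1
            · congr 1
              · congr 1
                · refine Finset.sum_congr rfl fun i hi => Finset.sum_congr rfl fun j hj => ?_
                  rw [Finset.mem_range] at hi hj
                  rw [GE i j (by omega) (by omega), GE (m+i) (m+j) (by omega) (by omega)]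
                · refine Finset.sum_congr rfl fun i hi => Finset.sum_congr rfl fun j hj => ?_
                  rw [Finset.mem_range] at hi hj
                  rw [GE i (m+j) (by omega) (by omega), GE j (m+i) (by omega) (by omega)]
              · refine Finset.sum_congr rfl fun i hi => Finset.sum_congr rfl fun j hj => ?_
                rw [Finset.mem_range] at hi hj
                rw [GW (m+i) j (by omega) (by omega), GW i (n+j) (by omega) (by omega)]
            · refine Finset.sum_congr rfl fun i hi => Finset.sum_congr rfl fun j hj => ?_
              rw [Finset.mem_range] at hi hj
              rw [GW i j (by omega) (by omega), GW (m+i) (n+j) (by omega) (by omega)]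
          · refine Finset.sum_congr rfl fun i hi => Finset.sum_congr rfl fun j hj => ?_
            rw [GS i j, GS (n+i) (n+j)]
        · refine Finset.sum_congr rfl fun i hi => Finset.sum_congr rfl fun j hj => ?_
          rw [GS i (n+j), GS j (n+i)]
      · refine Finset.sum_congr rfl fun i hi => ?_
        rw [GS (2*n+i) (2*n+i)]
    · refine Finset.sum_congr rfl fun k hk => Finset.sum_congr rfl fun l hl => ?_
      rw [GS (2*n+k) (2*n+l)]
  have masterA : ∀ (g : L) (h : L × (Fin (2*n+t) → F)),
      φ (g, 0) ((fun z => Br (g, 0) z)^[p-1] h) - φ (P g, 0) h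
        = -(coordE b (2*m+1) g ^ p * lam 0 ^ (p-1))
            * ∑ k ∈ Finset.range t, a k * coordW F (2*n+t) (2*n+k) h.2 := by
    intro g h
    obtain ⟨IT1, IT2, IT3, IT4⟩ := hIT g h
    obtain ⟨PC1, PC2⟩ := hPC g
    have hφ' : ∀ x y, φ x y = φ₁ x y
        + ∑ k ∈ Finset.range t, a k * eWw b (2*n+t) (2*m+1) (2*n+k) x y := by
      rw [hφ]; exact fun _ _ => rfl
    rw [hφ', hφ', master1 g h]
    have h1 : ∀ k ∈ Finset.range t,
        a k * eWw b (2*n+t) (2*m+1) (2*n+k) (g, 0) ((fun z => Br (g, 0) z)^[p-1] h)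
        = 0 := by
      intro k hk
      rw [Finset.mem_range] at hk
      simp only [eWw, coordW_zero]
      rw [IT4 (2*n+k) (by omega)]
      ring
    have h2 : ∀ k ∈ Finset.range t,
        a k * eWw b (2*n+t) (2*m+1) (2*n+k) (P g, 0) h
        = (coordE b (2*m+1) g ^ p * lam 0 ^ (p-1))
            * (a k * coordW F (2*n+t) (2*n+k) h.2) := by
      intro k hk
      simp only [eWw, coordW_zero]
      rw [PC2]
      ring
    rw [Finset.sum_congr rfl h1, Finset.sum_congr rfl h2, Finset.sum_const_zero,
      ← Finset.mul_sum]
    ring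
  constructor
  · constructor
    · intro H k hk
      have hg1 : coordE b (2*m+1) (e (2*m+1)) = 1 := by
        rw [coordE_e (2*m+1) (2*m+1) (by omega), if_pos rfl]
      have hh := H (e (2*m+1))
        ((0 : L), Pi.single (⟨2*n+k, by omega⟩ : Fin (2*n+t)) (1 : F))
      rw [masterA] at hh
      have hsnd : (((0 : L), Pi.single (⟨2*n+k, by omega⟩ : Fin (2*n+t)) (1 : F))
          : L × (Fin (2*n+t) → F)).2
          = Pi.single (⟨2*n+k, by omega⟩ : Fin (2*n+t)) (1 : F) := rfl
      rw [hsnd] at hh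
      have hsum : ∀ k' ∈ Finset.range t,
          a k' * coordW F (2*n+t) (2*n+k')
            (Pi.single (⟨2*n+k, by omega⟩ : Fin (2*n+t)) (1 : F))
          = if k' = k then a k' else 0 := by
        intro k' hk'
        rw [Finset.mem_range] at hk'
        rw [coordW, dif_pos (by omega : 2*n+k' < 2*n+t), Pi.single_apply]
        by_cases hkk : k' = k
        · rw [if_pos (by simp [Fin.ext_iff]; omega), if_pos hkk, mul_one]
        · rw [if_neg (by simp [Fin.ext_iff]; omega), if_neg hkk, mul_zero]
      rw [Finset.sum_congr rfl hsum, Finset.sum_ite_eq',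
        if_pos (Finset.mem_range.mpr hk), hg1, one_pow, one_mul] at hh
      rcases mul_eq_zero.mp hh with hc | hc
      · exact absurd (neg_eq_zero.mp hc) hL0
      · exact hc
    · intro ha g h
      rw [masterA g h]
      have hz : ∀ k ∈ Finset.range t, a k * coordW F (2*n+t) (2*n+k) h.2 = 0 := by
        intro k hk
        rw [ha k (Finset.mem_range.mp hk), zero_mul]
      rw [Finset.sum_congr rfl hz, Finset.sum_const_zero, mul_zero]
  · exact master1
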